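/- Let P ∈ Π_3 be the permutation matrix of the 3-cycle sending index 1 to 2, 2 to 3, and 3 to 1. Then every symmetric matrix A ∈ ℝ^{3×3} satisfying A = PᵀAP has all diagonal entries equal and all off-diagonal entries equal, and consequently Aut(A) = Π_3. In particular, for the cyclic subgroup G = {I₃, P, P²} of Π_3 there is no symmetric A with Aut(A) = G, i.e., 𝒜(G) = ∅ and G is not a symmetry group. -/

import Mathlib

/-! Invariance under the 3-cycle puts the three diagonal entries in one orbit and the three
off-diagonal positions (0,1), (1,2), (2,0) in another; symmetry adds their mirror images, so
`A = a • 1 + b • (J - 1)`, which commutes with every permutation matrix. If `Aut A` were the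
cyclic group `⟨(0 1 2)⟩`, it would then contain the transposition `(0 1)`, which is odd,
whereas the 3-cycle is even. -/

/- Setting: graphs are symmetric real n×n matrices. `pm n σ` is the permutation
matrix of `σ` (entry (i,j) equals 1 iff σ j = i, so it "sends j to σ j").
`DS n` is the set of doubly stochastic matrices, `Aut A` the set of permutation
matrices commuting with `A`, and `AutConv A` its doubly stochastic relaxation. -/

open Matrix MeasureTheory Finset

noncomputable section

def pm (n : ℕ) (σ : Equiv.Perm (Fin n)) : Matrix (Fin n) (Fin n) ℝ :=
  Matrix.of fun i j => if σ j = i then (1 : ℝ) else 0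

def IsPermMatrix {n : ℕ} (P : Matrix (Fin n) (Fin n) ℝ) : Prop :=
  ∃ σ : Equiv.Perm (Fin n), P = pm n σ

def DS (n : ℕ) : Set (Matrix (Fin n) (Fin n) ℝ) :=
  {S | (∀ i j, 0 ≤ S i j) ∧ (∀ i, ∑ j, S i j = 1) ∧ (∀ j, ∑ i, S i j = 1)}

def Aut {n : ℕ} (A : Matrix (Fin n) (Fin n) ℝ) : Set (Matrix (Fin n) (Fin n) ℝ) :=
  {P | IsPermMatrix P ∧ A * P = P * A}

def AutConv {n : ℕ} (A : Matrix (Fin n) (Fin n) ℝ) : Set (Matrix (Fin n) (Fin n) ℝ) :=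
  {S | S ∈ DS n ∧ A * S = S * A}

def matSet {n : ℕ} (G : Subgroup (Equiv.Perm (Fin n))) : Set (Matrix (Fin n) (Fin n) ℝ) :=
  (pm n) '' (G : Set (Equiv.Perm (Fin n)))

/-- `𝒜(G)`: symmetric matrices whose automorphism group is exactly `G`. -/
def AcalA {n : ℕ} (G : Subgroup (Equiv.Perm (Fin n))) : Set (Matrix (Fin n) (Fin n) ℝ) :=
  {A | A.IsSymm ∧ Aut A = matSet G}

lemma mul_pm_apply {n : ℕ} (A : Matrix (Fin n) (Fin n) ℝ) (σ : Equiv.Perm (Fin n)) (i j : Fin n) :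
    (A * pm n σ) i j = A i (σ j) := by
  simp [mul_apply, pm]

lemma pm_mul_apply {n : ℕ} (A : Matrix (Fin n) (Fin n) ℝ) (σ : Equiv.Perm (Fin n)) (i j : Fin n) :
    (pm n σ * A) i j = A (σ.symm i) j := by
  simp [mul_apply, pm, ← Equiv.eq_symm_apply]

lemma pm_transpose_mul_apply {n : ℕ} (A : Matrix (Fin n) (Fin n) ℝ) (σ : Equiv.Perm (Fin n))
    (i j : Fin n) : ((pm n σ)ᵀ * A) i j = A (σ i) j := by
  simp [mul_apply, pm]

lemma pm_injective (n : ℕ) : Function.Injective (pm n) := by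
  intro σ τ h
  refine Equiv.ext fun j => ?_
  simpa [pm, eq_comm] using congrFun (congrFun h (σ j)) j

lemma pm_transpose_mul_mul_pm_eq_iff {n : ℕ} (A : Matrix (Fin n) (Fin n) ℝ)
    (σ : Equiv.Perm (Fin n)) :
    (pm n σ)ᵀ * A * pm n σ = A ↔ ∀ i j, A (σ i) (σ j) = A i j := by
  simp only [← Matrix.ext_iff, mul_pm_apply, pm_transpose_mul_apply]

lemma pm_mem_Aut_iff {n : ℕ} (A : Matrix (Fin n) (Fin n) ℝ) (σ : Equiv.Perm (Fin n)) :
    pm n σ ∈ Aut A ↔ ∀ i j, A (σ i) (σ j) = A i j := by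
  have hP : IsPermMatrix (pm n σ) := ⟨σ, rfl⟩
  simp only [Aut, Set.mem_ofPred_eq, hP, true_and, ← Matrix.ext_iff, mul_pm_apply, pm_mul_apply]
  constructor
  · intro h i j
    simpa using h (σ i) j
  · intro h i j
    simpa using h (σ.symm i) j

lemma Aut_eq_of_apply_eq_ite {n : ℕ} {A : Matrix (Fin n) (Fin n) ℝ} {a b : ℝ}
    (hA : ∀ i j, A i j = if i = j then a else b) : Aut A = {P | IsPermMatrix P} := by
  ext P
  refine ⟨And.left, ?_⟩
  rintro ⟨σ, rfl⟩
  rw [pm_mem_Aut_iff]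
  intro i j
  simp only [hA, σ.injective.eq_iff]

lemma apply_eq_ite_of_isSymm_of_finRotate_three {A : Matrix (Fin 3) (Fin 3) ℝ} (hs : A.IsSymm)
    (hrot : ∀ i j, A (finRotate 3 i) (finRotate 3 j) = A i j) :
    ∀ i j, A i j = if i = j then A 0 0 else A 0 1 := by
  have h11 : A 1 1 = A 0 0 := hrot 0 0
  have h22 : A 2 2 = A 1 1 := hrot 1 1
  have h12 : A 1 2 = A 0 1 := hrot 0 1
  have h20 : A 2 0 = A 1 2 := hrot 1 2
  intro i j
  fin_cases i <;> fin_cases j <;>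
    simp only [Fin.zero_eta, Fin.mk_one, Fin.reduceFinMk, Fin.isValue, Fin.reduceEq, ↓reduceIte] <;>
    linarith [hs.apply 0 1, hs.apply 0 2, hs.apply 1 2]

lemma swap_zero_one_notMem_zpowers_finRotate_three :
    Equiv.swap (0 : Fin 3) 1 ∉ Subgroup.zpowers (finRotate 3) := by
  have hle : Subgroup.zpowers (finRotate 3) ≤ alternatingGroup (Fin 3) := by
    rw [Subgroup.zpowers_le, Equiv.Perm.mem_alternatingGroup, sign_finRotate]
    rfl
  intro h
  have := Equiv.Perm.mem_alternatingGroup.mp (hle h)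
  rw [Equiv.Perm.sign_swap (by decide)] at this
  exact absurd this (by decide)

/-- `finRotate 3` is the 3-cycle 0 ↦ 1 ↦ 2 ↦ 0. Every symmetric `A` with
`A = PᵀAP` for its permutation matrix `P` has all diagonal entries equal and all
off-diagonal entries equal, hence `Aut A = Π₃` (all permutation matrices). Consequently
the cyclic subgroup generated by this 3-cycle is not a symmetry group: `𝒜(G) = ∅`. -/
theorem stmt19 :
    (∀ A : Matrix (Fin 3) (Fin 3) ℝ, A.IsSymm →
      (pm 3 (finRotate 3))ᵀ * A * pm 3 (finRotate 3) = A →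
        ((∀ i j, A i i = A j j) ∧
         (∀ i j k l, i ≠ j → k ≠ l → A i j = A k l) ∧
         Aut A = {P | IsPermMatrix P})) ∧
    AcalA (Subgroup.zpowers (finRotate 3)) = ∅ := by
  refine ⟨fun A hs hc => ?_, ?_⟩
  · have hA := apply_eq_ite_of_isSymm_of_finRotate_three hs
      ((pm_transpose_mul_mul_pm_eq_iff A _).mp hc)
    refine ⟨fun i j => ?_, fun i j k l hij hkl => ?_, Aut_eq_of_apply_eq_ite hA⟩
    · simp [hA i i, hA j j]
    · simp [hA i j, hA k l, hij, hkl]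
  · refine Set.eq_empty_of_forall_notMem fun A ⟨hs, hAut⟩ => ?_
    have hrot : pm 3 (finRotate 3) ∈ Aut A := hAut ▸ ⟨_, Subgroup.mem_zpowers _, rfl⟩
    have hswap : pm 3 (Equiv.swap 0 1) ∈ Aut A := by
      rw [Aut_eq_of_apply_eq_ite
        (apply_eq_ite_of_isSymm_of_finRotate_three hs ((pm_mem_Aut_iff A _).mp hrot))]
      exact ⟨_, rfl⟩
    rw [hAut] at hswap
    obtain ⟨τ, hτ, hτswap⟩ := hswap
    exact swap_zero_one_notMem_zpowers_finRotate_three (pm_injective 3 hτswap ▸ hτ)
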